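/- arXiv:1805.00737 — 2 statements merged into one kernel-verified Lean document; each statement's English description precedes it below -/
import Mathlib

section
/- (Stealthy replay attacks.) Let F, S, H, K1, K̂, B, K be real n×n matrices with K̂ = K1 + F·H, and let κ, μ > 0 be such that ‖exp(s·F)‖ ≤ κ·e^{−μ·s} for all s ≥ 0. Let w, ρ : ℝ → ℝⁿ with w continuous, ρ continuously differentiable, ‖w(t)‖ ≤ w̄ and ‖ρ(t)‖ ≤ ρ̄ for all t. Let T_a ∈ ℝ, T > 0, and let e : ℝ → ℝⁿ be differentiable and satisfy, for all t ≥ T_a, ė(t) = F·e(t) + S·(w(t−T) + B·K·ρ(t−T)) − K1·ρ(t−T) − H·ρ̇(t−T). Let ē_{T_a} ≥ 0 and define the threshold ē(t) = κ·e^{−μ(t−T_a)}·(ē_{T_a} + ‖H‖·ρ̄) + ‖H‖·ρ̄ + ∫_{T_a}^{t} κ·e^{−μ(t−τ)}·(‖S‖·w̄ + ‖S·B·K − K̂‖·ρ̄) dτ. If ‖e(T_a)‖ ≤ ē_{T_a}, then for all t ∈ [T_a, T_a + T), the residual r(t) = e(t) + ρ(t−T) satisfies ‖r(t)‖ ≤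 ē(t) + ρ̄; that is, the replay attack is not detected during its first period. -/
/-!
Put `z = e + H ρ(· - T)`: the derivative of the replayed noise cancels, and `z` solves
`ż = F z + g` with forcing `g = S w(· - T) + (S B K - K̂) ρ(· - T)`, bounded by
`‖S‖ w̄ + ‖S B K - K̂‖ ρ̄`. Variation of constants together with `‖exp(sF)‖ ≤ κ e^{-μ s}` bounds
`‖z(t)‖` by `ē(t) - ‖H‖ ρ̄`, and the residual `r = z + (1 - H) ρ(· - T)` adds at most
`ρ̄ + ‖H‖ ρ̄`.
-/

open NormedSpace Set

section VariationOfConstants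

variable {E : Type*} [NormedAddCommGroup E] [NormedSpace ℝ E] [CompleteSpace E]
  (A : E →L[ℝ] E)

theorem hasDerivAt_exp_sub_smul (t s : ℝ) :
    HasDerivAt (fun u : ℝ => exp ((t - u) • A)) (-(exp ((t - s) • A) * A)) s := by
  simpa [Function.comp_def] using
    (hasDerivAt_exp_smul_const A (t - s)).scomp s ((hasDerivAt_id s).const_sub t)

theorem continuous_exp_sub_smul (t : ℝ) : Continuous fun u : ℝ => exp ((t - u) • A) :=
  continuous_iff_continuousAt.2 fun s => (hasDerivAt_exp_sub_smul A t s).continuousAt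

theorem eq_exp_smul_add_integral_of_hasDerivAt {z g : ℝ → E} {a t : ℝ} (hat : a ≤ t)
    (hg : Continuous g) (hz : ∀ τ ∈ Icc a t, HasDerivAt z (A (z τ) + g τ) τ) :
    z t = exp ((t - a) • A) (z a) + ∫ τ in a..t, exp ((t - τ) • A) (g τ) := by
  have hderiv : ∀ τ ∈ uIcc a t, HasDerivAt (fun s => exp ((t - s) • A) (z s))
      (exp ((t - τ) • A) (g τ)) τ := by
    intro τ hτ
    rw [uIcc_of_le hat] at hτ
    convert (hasDerivAt_exp_sub_smul A t τ).clm_apply (hz τ hτ) using 1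
    simp only [neg_apply, mul_apply_eq_comp, map_add]
    abel
  have hint : IntervalIntegrable (fun τ => exp ((t - τ) • A) (g τ)) MeasureTheory.volume a t :=
    ((continuous_exp_sub_smul A t).clm_apply hg).intervalIntegrable a t
  rw [intervalIntegral.integral_eq_sub_of_hasDerivAt hderiv hint]
  simp [exp_zero]

theorem norm_le_of_hasDerivAt_of_norm_exp_smul_le {z g : ℝ → E} {a t κ μ z₀ c : ℝ}
    (hat : a ≤ t) (hκ : 0 ≤ κ) (hA : ∀ s, 0 ≤ s → ‖exp (s • A)‖ ≤ κ * Real.exp (-μ * s))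
    (hg : Continuous g) (hgc : ∀ τ ∈ Icc a t, ‖g τ‖ ≤ c) (hz₀ : ‖z a‖ ≤ z₀)
    (hz : ∀ τ ∈ Icc a t, HasDerivAt z (A (z τ) + g τ) τ) :
    ‖z t‖ ≤ κ * Real.exp (-μ * (t - a)) * z₀
      + ∫ τ in a..t, κ * Real.exp (-μ * (t - τ)) * c := by
  rw [eq_exp_smul_add_integral_of_hasDerivAt A hat hg hz]
  refine (norm_add_le _ _).trans (add_le_add ?_ ?_)
  · exact (ContinuousLinearMap.le_opNorm _ _).trans
      (mul_le_mul (hA _ (sub_nonneg.2 hat)) hz₀ (norm_nonneg _) (by positivity))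
  · refine intervalIntegral.norm_integral_le_of_norm_le hat
      (.of_forall fun τ hτ => (ContinuousLinearMap.le_opNorm _ _).trans ?_)
      (Continuous.intervalIntegrable (by fun_prop) a t)
    exact mul_le_mul (hA _ (sub_nonneg.2 hτ.2)) (hgc τ (Ioc_subset_Icc_self hτ)) (norm_nonneg _)
      (by positivity)

end VariationOfConstants

theorem replay_attack_stealthy_general {n : ℕ}
    (F S H K1 Khat B K : EuclideanSpace ℝ (Fin n) →L[ℝ] EuclideanSpace ℝ (Fin n))
    (hKhat : Khat = K1 + F * H)
    (κ μ : ℝ) (hκ : 0 < κ)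
    (hFdecay : ∀ s : ℝ, 0 ≤ s → ‖NormedSpace.exp (s • F)‖ ≤ κ * Real.exp (-μ * s))
    (w ρ ρ' : ℝ → EuclideanSpace ℝ (Fin n))
    (wbar ρbar : ℝ)
    (hw : Continuous w)
    (hρ : ∀ t : ℝ, HasDerivAt ρ (ρ' t) t)
    (hwbound : ∀ t : ℝ, ‖w t‖ ≤ wbar)
    (hρbound : ∀ t : ℝ, ‖ρ t‖ ≤ ρbar)
    (T_a T : ℝ)
    (e : ℝ → EuclideanSpace ℝ (Fin n))
    (hode : ∀ t : ℝ, T_a ≤ t →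
      HasDerivAt e
        (F (e t) + S (w (t - T) + (B * K) (ρ (t - T)))
          - K1 (ρ (t - T)) - H (ρ' (t - T))) t)
    (ebarTa : ℝ)
    (ebar : ℝ → ℝ)
    (hebar : ∀ t : ℝ, ebar t =
      κ * Real.exp (-μ * (t - T_a)) * (ebarTa + ‖H‖ * ρbar) + ‖H‖ * ρbar
      + ∫ τ in T_a..t,
          κ * Real.exp (-μ * (t - τ)) * (‖S‖ * wbar + ‖S * B * K - Khat‖ * ρbar))
    (hinit : ‖e T_a‖ ≤ ebarTa) :
    ∀ t : ℝ, T_a ≤ t → t < T_a + T → ‖e t + ρ (t - T)‖ ≤ ebar t + ρbar := by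
  intro t ht _
  set g := fun τ => S (w (τ - T)) + (S * B * K - Khat) (ρ (τ - T))
  set z := fun τ => e τ + H (ρ (τ - T))
  have hρc : Continuous ρ := continuous_iff_continuousAt.2 fun s => (hρ s).continuousAt
  have hg : Continuous g := by fun_prop
  have hgc : ∀ τ ∈ Icc T_a t, ‖g τ‖ ≤ ‖S‖ * wbar + ‖S * B * K - Khat‖ * ρbar := fun τ _ =>
    norm_add_le_of_le (S.le_opNorm_of_le (hwbound _))
      ((S * B * K - Khat).le_opNorm_of_le (hρbound _))
  have hz : ∀ τ ∈ Icc T_a t, HasDerivAt z (F (z τ) + g τ) τ := by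
    intro τ hτ
    refine ((hode τ hτ.1).add
      (H.hasFDerivAt.comp_hasDerivAt τ ((hρ (τ - T)).comp_sub_const τ T))).congr_deriv ?_
    simp only [z, g, hKhat, mul_apply_eq_comp, add_apply, sub_apply, map_add]
    abel
  have hz₀ : ‖z T_a‖ ≤ ebarTa + ‖H‖ * ρbar :=
    norm_add_le_of_le hinit (H.le_opNorm_of_le (hρbound _))
  have hzt := norm_le_of_hasDerivAt_of_norm_exp_smul_le F ht hκ.le hFdecay hg hgc hz₀ hz
  have hr : ‖e t + ρ (t - T)‖ ≤ ‖z t‖ + (ρbar + ‖H‖ * ρbar) :=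
    calc ‖e t + ρ (t - T)‖ = ‖z t + (ρ (t - T) - H (ρ (t - T)))‖ := by
          congr 1; simp only [z]; abel
      _ ≤ _ := norm_add_le_of_le le_rfl
          (norm_sub_le_of_le (hρbound _) (H.le_opNorm_of_le (hρbound _)))
  rw [hebar t]
  linarith

/-- **Stealthy replay attacks (Statement 2, Proposition 1).**
Matrices are continuous linear maps on Euclidean space (so `‖·‖` is the
operator norm induced by the Euclidean norm), with matrix product `*`.
Assume `Khat = K1 + F·H`, `κ, μ > 0` with `‖exp(s F)‖ ≤ κ e^{−μ s}` for all
`s ≥ 0`, bounded noises `‖w‖ ≤ wbar`, `‖ρ‖ ≤ ρbar` (`w` continuous, `ρ` C¹),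
`T > 0`, and the error dynamics under replay attack for `t ≥ T_a`.
If `‖e(T_a)‖ ≤ ebarTa`, then for all `t ∈ [T_a, T_a + T)` the residual
`r(t) = e(t) + ρ(t−T)` satisfies `‖r(t)‖ ≤ ebar(t) + ρbar`, where `ebar` is
the time-varying threshold; i.e. the replay attack is not detected during
its first period. -/
theorem replay_attack_stealthy {n : ℕ}
    (F S H K1 Khat B K : EuclideanSpace ℝ (Fin n) →L[ℝ] EuclideanSpace ℝ (Fin n))
    (hKhat : Khat = K1 + F * H)
    (κ μ : ℝ) (hκ : 0 < κ) (hμ : 0 < μ)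
    (hFdecay : ∀ s : ℝ, 0 ≤ s → ‖NormedSpace.exp (s • F)‖ ≤ κ * Real.exp (-μ * s))
    (w ρ ρ' : ℝ → EuclideanSpace ℝ (Fin n))
    (wbar ρbar : ℝ)
    (hw : Continuous w)
    (hρ : ∀ t : ℝ, HasDerivAt ρ (ρ' t) t) (hρ' : Continuous ρ')
    (hwbound : ∀ t : ℝ, ‖w t‖ ≤ wbar)
    (hρbound : ∀ t : ℝ, ‖ρ t‖ ≤ ρbar)
    (T_a T : ℝ) (hT : 0 < T)
    (e : ℝ → EuclideanSpace ℝ (Fin n))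
    (hode : ∀ t : ℝ, T_a ≤ t →
      HasDerivAt e
        (F (e t) + S (w (t - T) + (B * K) (ρ (t - T)))
          - K1 (ρ (t - T)) - H (ρ' (t - T))) t)
    (ebarTa : ℝ) (hebarTa : 0 ≤ ebarTa)
    (ebar : ℝ → ℝ)
    (hebar : ∀ t : ℝ, ebar t =
      κ * Real.exp (-μ * (t - T_a)) * (ebarTa + ‖H‖ * ρbar) + ‖H‖ * ρbar
      + ∫ τ in T_a..t,
          κ * Real.exp (-μ * (t - τ)) * (‖S‖ * wbar + ‖S * B * K - Khat‖ * ρbar))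
    (hinit : ‖e T_a‖ ≤ ebarTa) :
    ∀ t : ℝ, T_a ≤ t → t < T_a + T → ‖e t + ρ (t - T)‖ ≤ ebar t + ρbar :=
  replay_attack_stealthy_general F S H K1 Khat B K hKhat κ μ hκ hFdecay w ρ ρ' wbar ρbar hw hρ
    hwbound hρbound T_a T e hode ebarTa ebar hebar hinit
end

section
/- Under the hypotheses of the detectability setting — real n×n matrices F, S, H, K1, K̂, B, K with K̂ = K1 + F·H and S = I − H; κ, μ > 0 with ‖exp(s·F)‖ ≤ κ·e^{−μ·s} for all s ≥ 0; w continuous with ‖w(t)‖ ≤ w̄; ρ continuously differentiable with ‖ρ(t)‖ ≤ ρ̄; δ continuously differentiable; ε differentiable satisfying, for all t ≥ T_a, ε̇(t) = F·ε(t) + S·(w(t−T) + B·K·ρ(t−T)) − K1·(ρ(t−T) + δ(t)) − H·(ρ̇(t−T) + δ̇(t)); and ‖ε(T_a) + H·δ(T_a)‖ ≤ ē_{T_a} — define ē(t) = κ·e^{−μ(t−T_a)}·(ē_{T_a} + ‖H‖·ρ̄) + ‖H‖·ρ̄ + ∫_{T_a}^{t} κ·e^{−μ(t−τ)}·(‖S‖·w̄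 + ‖S·B·K − K̂‖·ρ̄) dτ and r̄(t) = ē(t) + ρ̄. Then for every t ≥ T_a, the residual r(t) = ε(t) + ρ(t−T) + δ(t) satisfies the lower bound ‖r(t)‖ ≥ ‖S·δ(t) − ∫_{T_a}^{t} exp((t−τ)·F)·K̂·δ(τ) dτ‖ − r̄(t). -/
/-!
Adding `H (ρ (t - T) + δ t)` to the error cancels the derivatives of `ρ` and `δ`: the shifted
error `z` solves `ż = F z + p - K̂ δ`, where `p = S w(· - T) + (S B K - K̂) ρ(· - T)` is bounded by
`‖S‖ w̄ + ‖S B K - K̂‖ ρ̄`. By variation of constants, `z t + I` with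
`I = ∫_{T_a}^t exp((t - τ) F) K̂ δ(τ) dτ` is the free response from `z T_a` plus the response to
`p`, so the decay bound on `exp(s F)` makes `‖z t + I‖ ≤ ē t - ‖H‖ ρ̄`. Since `S = 1 - H`, the
residual is `(S δ t - I) + (z t + I + S ρ(t - T))`, and `‖S ρ(t - T)‖ ≤ (1 + ‖H‖) ρ̄`.
-/

open NormedSpace

variable {E : Type*} [NormedAddCommGroup E] [NormedSpace ℝ E]

section VariationOfConstants

variable [CompleteSpace E] (F : E →L[ℝ] E)

theorem continuous_exp_sub_smul_s5 (b : ℝ) : Continuous fun τ : ℝ => exp ((b - τ) • F) :=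
  (differentiable_exp_smul_const ℝ F).continuous.comp (continuous_sub_left b)

theorem hasDerivAt_exp_sub_smul_apply {z : ℝ → E} {g : E} {b t : ℝ}
    (hz : HasDerivAt z (F (z t) + g) t) :
    HasDerivAt (fun τ => exp ((b - τ) • F) (z τ)) (exp ((b - t) • F) g) t := by
  have hexp : HasDerivAt (fun τ : ℝ => exp ((b - τ) • F)) (-(exp ((b - t) • F) * F)) t := by
    simpa [Function.comp_def] using
      (hasDerivAt_exp_smul_const F (b - t)).scomp t ((hasDerivAt_id t).const_sub b)
  convert hexp.clm_apply hz using 1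
  simp only [neg_apply, mul_apply_eq_comp, map_add]
  abel

theorem eq_exp_smul_apply_add_integral {z g : ℝ → E} (hg : Continuous g) {a b : ℝ}
    (hab : a ≤ b) (hz : ∀ t ∈ Set.Icc a b, HasDerivAt z (F (z t) + g t) t) :
    z b = exp ((b - a) • F) (z a) + ∫ τ in a..b, exp ((b - τ) • F) (g τ) := by
  have hftc := intervalIntegral.integral_eq_sub_of_hasDerivAt
    (fun t ht => hasDerivAt_exp_sub_smul_apply F (b := b) (hz t (Set.uIcc_of_le hab ▸ ht)))
    (((continuous_exp_sub_smul_s5 F b).clm_apply hg).intervalIntegrable a b)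
  simp only [sub_self, zero_smul, exp_zero, one_apply_eq_self] at hftc
  rw [hftc]
  abel

end VariationOfConstants

theorem norm_exp_smul_apply_add_integral_le {F : E →L[ℝ] E} {κ μ c C a b : ℝ} {x : E}
    {p : ℝ → E} (hdecay : ∀ s : ℝ, 0 ≤ s → ‖exp (s • F)‖ ≤ κ * Real.exp (-μ * s))
    (hx : ‖x‖ ≤ c) (hp : ∀ τ ∈ Set.Ioc a b, ‖p τ‖ ≤ C) (hab : a ≤ b) :
    ‖exp ((b - a) • F) x + ∫ τ in a..b, exp ((b - τ) • F) (p τ)‖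
      ≤ κ * Real.exp (-μ * (b - a)) * c + ∫ τ in a..b, κ * Real.exp (-μ * (b - τ)) * C := by
  refine (norm_add_le _ _).trans (add_le_add ?_ ?_)
  · exact ContinuousLinearMap.le_of_opNorm_le_of_le _ (hdecay _ (sub_nonneg.2 hab)) hx
  · refine intervalIntegral.norm_integral_le_of_norm_le hab (.of_forall fun τ hτ => ?_)
      (Continuous.intervalIntegrable (by fun_prop) a b)
    exact ContinuousLinearMap.le_of_opNorm_le_of_le _ (hdecay _ (sub_nonneg.2 hτ.2)) (hp τ hτ)

theorem hasDerivAt_add_apply_add {F S H K1 Khat B K : E →L[ℝ] E} (hKhat : Khat = K1 + F * H)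
    {w ρ ρ' δ δ' ε : ℝ → E} {T t : ℝ} (hρ : HasDerivAt ρ (ρ' (t - T)) (t - T))
    (hδ : HasDerivAt δ (δ' t) t)
    (hε : HasDerivAt ε (F (ε t) + S (w (t - T) + (B * K) (ρ (t - T)))
      - K1 (ρ (t - T) + δ t) - H (ρ' (t - T) + δ' t)) t) :
    HasDerivAt (fun s => ε s + H (ρ (s - T) + δ s))
      (F (ε t + H (ρ (t - T) + δ t))
        + (S (w (t - T)) + (S * B * K - Khat) (ρ (t - T)) - Khat (δ t))) t := by
  refine (hε.add (H.hasFDerivAt.comp_hasDerivAt t ((hρ.comp_sub_const t T).add hδ))).congr_deriv ?_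
  simp only [hKhat, map_add, add_apply, sub_apply, mul_apply_eq_comp]
  abel

theorem residual_lower_bound_general {n : ℕ}
    (F S H K1 Khat B K : EuclideanSpace ℝ (Fin n) →L[ℝ] EuclideanSpace ℝ (Fin n))
    (hKhat : Khat = K1 + F * H) (hS : S = 1 - H)
    (κ μ : ℝ)
    (hFdecay : ∀ s : ℝ, 0 ≤ s → ‖NormedSpace.exp (s • F)‖ ≤ κ * Real.exp (-μ * s))
    (w ρ ρ' δ δ' : ℝ → EuclideanSpace ℝ (Fin n))
    (wbar ρbar : ℝ)
    (hw : Continuous w)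
    (hρ : ∀ t : ℝ, HasDerivAt ρ (ρ' t) t)
    (hδ : ∀ t : ℝ, HasDerivAt δ (δ' t) t)
    (hwbound : ∀ t : ℝ, ‖w t‖ ≤ wbar)
    (hρbound : ∀ t : ℝ, ‖ρ t‖ ≤ ρbar)
    (T_a T : ℝ)
    (ε : ℝ → EuclideanSpace ℝ (Fin n))
    (hode : ∀ t : ℝ, T_a ≤ t →
      HasDerivAt ε
        (F (ε t) + S (w (t - T) + (B * K) (ρ (t - T)))
          - K1 (ρ (t - T) + δ t) - H (ρ' (t - T) + δ' t)) t)
    (ebarTa : ℝ)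
    (ebar rbar : ℝ → ℝ)
    (hebar : ∀ t : ℝ, ebar t =
      κ * Real.exp (-μ * (t - T_a)) * (ebarTa + ‖H‖ * ρbar) + ‖H‖ * ρbar
      + ∫ τ in T_a..t,
          κ * Real.exp (-μ * (t - τ)) * (‖S‖ * wbar + ‖S * B * K - Khat‖ * ρbar))
    (hrbar : ∀ t : ℝ, rbar t = ebar t + ρbar)
    (hinit : ‖ε T_a + H (δ T_a)‖ ≤ ebarTa) :
    ∀ t : ℝ, T_a ≤ t →
      ‖ε t + ρ (t - T) + δ t‖ ≥
        ‖S (δ t)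
          - ∫ τ in T_a..t, (NormedSpace.exp ((t - τ) • F)) (Khat (δ τ))‖
        - rbar t := by
  intro t ht
  have hρc : Continuous ρ := Differentiable.continuous fun s => (hρ s).differentiableAt
  have hδc : Continuous δ := Differentiable.continuous fun s => (hδ s).differentiableAt
  set z := fun s => ε s + H (ρ (s - T) + δ s)
  set p := fun s => S (w (s - T)) + (S * B * K - Khat) (ρ (s - T))
  set I := ∫ τ in T_a..t, exp ((t - τ) • F) (Khat (δ τ))
  have hp : Continuous p := by fun_prop
  have hvar : z t + I = exp ((t - T_a) • F) (z T_a) + ∫ τ in T_a..t, exp ((t - τ) • F) (p τ) := by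
    rw [eq_exp_smul_apply_add_integral F (z := z) (g := fun s => p s - Khat (δ s))
      (by fun_prop) ht fun s hs => hasDerivAt_add_apply_add hKhat (hρ _) (hδ s) (hode s hs.1),
      intervalIntegral.integral_congr fun τ _ => map_sub _ (p τ) _,
      intervalIntegral.integral_sub
        (((continuous_exp_sub_smul_s5 F t).clm_apply hp).intervalIntegrable _ _)
        (((continuous_exp_sub_smul_s5 F t).clm_apply (by fun_prop)).intervalIntegrable _ _)]
    abel
  have hz : ‖z T_a‖ ≤ ebarTa + ‖H‖ * ρbar := by
    rw [show z T_a = ε T_a + H (δ T_a) + H (ρ (T_a - T)) by simp only [z, map_add]; abel]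
    exact (norm_add_le _ _).trans (add_le_add hinit (H.le_opNorm_of_le (hρbound _)))
  have hpbound : ∀ τ, ‖p τ‖ ≤ ‖S‖ * wbar + ‖S * B * K - Khat‖ * ρbar := fun τ =>
    (norm_add_le _ _).trans (add_le_add (S.le_opNorm_of_le (hwbound _))
      ((S * B * K - Khat).le_opNorm_of_le (hρbound _)))
  have hSρ : ‖S (ρ (t - T))‖ ≤ ρbar + ‖H‖ * ρbar := by
    rw [hS, sub_apply, one_apply_eq_self]
    exact (norm_sub_le _ _).trans (add_le_add (hρbound _) (H.le_opNorm_of_le (hρbound _)))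
  have hresidual : ε t + ρ (t - T) + δ t = (S (δ t) - I) + (z t + I + S (ρ (t - T))) := by
    simp only [z, hS, sub_apply, one_apply_eq_self, map_add]
    abel
  have hrest : ‖z t + I + S (ρ (t - T))‖ ≤ rbar t := by
    have hsol := norm_exp_smul_apply_add_integral_le hFdecay hz (fun τ _ => hpbound τ) ht
    rw [← hvar] at hsol
    rw [hrbar, hebar]
    linarith [norm_add_le (z t + I) (S (ρ (t - T)))]
  rw [hresidual, ge_iff_le]
  linarith [norm_le_add_norm_add (S (δ t) - I) (z t + I + S (ρ (t - T)))]

/-- **Lower bound on the residual under a watermarked replay attack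
(Statement 5).**
Matrices are continuous linear maps on Euclidean space (so `‖·‖` is the
operator norm induced by the Euclidean norm), with matrix product `*` and
identity `1`. Under the detectability setting — `Khat = K1 + F·H`,
`S = I − H`, exponential decay of `exp(s F)`, bounded noises, the
watermarked error dynamics for `t ≥ T_a`, and
`‖ε(T_a) + H δ(T_a)‖ ≤ ebarTa` — the residual
`r(t) = ε(t) + ρ(t−T) + δ(t)` satisfies, for every `t ≥ T_a`,
`‖r(t)‖ ≥ ‖S δ(t) − ∫_{T_a}^t exp((t−τ) F) Khat δ(τ) dτ‖ − rbar(t)`. -/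
theorem residual_lower_bound {n : ℕ}
    (F S H K1 Khat B K : EuclideanSpace ℝ (Fin n) →L[ℝ] EuclideanSpace ℝ (Fin n))
    (hKhat : Khat = K1 + F * H) (hS : S = 1 - H)
    (κ μ : ℝ) (hκ : 0 < κ) (hμ : 0 < μ)
    (hFdecay : ∀ s : ℝ, 0 ≤ s → ‖NormedSpace.exp (s • F)‖ ≤ κ * Real.exp (-μ * s))
    (w ρ ρ' δ δ' : ℝ → EuclideanSpace ℝ (Fin n))
    (wbar ρbar : ℝ)
    (hw : Continuous w)
    (hρ : ∀ t : ℝ, HasDerivAt ρ (ρ' t) t) (hρ' : Continuous ρ')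
    (hδ : ∀ t : ℝ, HasDerivAt δ (δ' t) t) (hδ' : Continuous δ')
    (hwbound : ∀ t : ℝ, ‖w t‖ ≤ wbar)
    (hρbound : ∀ t : ℝ, ‖ρ t‖ ≤ ρbar)
    (T_a T : ℝ)
    (ε : ℝ → EuclideanSpace ℝ (Fin n))
    (hode : ∀ t : ℝ, T_a ≤ t →
      HasDerivAt ε
        (F (ε t) + S (w (t - T) + (B * K) (ρ (t - T)))
          - K1 (ρ (t - T) + δ t) - H (ρ' (t - T) + δ' t)) t)
    (ebarTa : ℝ) (hebarTa : 0 ≤ ebarTa)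
    (ebar rbar : ℝ → ℝ)
    (hebar : ∀ t : ℝ, ebar t =
      κ * Real.exp (-μ * (t - T_a)) * (ebarTa + ‖H‖ * ρbar) + ‖H‖ * ρbar
      + ∫ τ in T_a..t,
          κ * Real.exp (-μ * (t - τ)) * (‖S‖ * wbar + ‖S * B * K - Khat‖ * ρbar))
    (hrbar : ∀ t : ℝ, rbar t = ebar t + ρbar)
    (hinit : ‖ε T_a + H (δ T_a)‖ ≤ ebarTa) :
    ∀ t : ℝ, T_a ≤ t →
      ‖ε t + ρ (t - T) + δ t‖ ≥
        ‖S (δ t)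
          - ∫ τ in T_a..t, (NormedSpace.exp ((t - τ) • F)) (Khat (δ τ))‖
        - rbar t :=
  residual_lower_bound_general F S H K1 Khat B K hKhat hS κ μ hFdecay w ρ ρ' δ δ' wbar ρbar hw hρ hδ
    hwbound hρbound T_a T ε hode ebarTa ebar rbar hebar hrbar hinit
end
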